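/- Entailment is decided by the minimal model: if I_min is a minimal model of a consistent MANCaLog program P, then for every fact F = (⟨L,bnd⟩,c):[t1,t2], P entails F if and only if I_min satisfies F. -/
import Mathlib


noncomputable section

/- ============================================================
   MANCaLog: common definitions.
   We fix a finite directed graph `G = (V, E)` (with `E : Set (V × V)`),
   a finite label set `L` with a fluency predicate `flu : L → Prop`
   (fluent labels are those satisfying `flu`), and a time horizon `tmax`.
   ============================================================ -/

/-- A bound: a (possibly empty) subinterval of the real interval `[0,1]`. -/
def Bnd : Type := {s : Set ℝ // s ⊆ Set.Icc (0:ℝ) 1 ∧ s.OrdConnected}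

namespace Bnd

/-- The full bound `[0,1]`. -/
def full : Bnd := ⟨Set.Icc 0 1, subset_rfl, Set.ordConnected_Icc⟩

/-- The empty (invalid) bound `∅`. -/
def empty : Bnd := ⟨∅, by simp, Set.ordConnected_empty⟩

/-- Intersection of two bounds. -/
def inter (b₁ b₂ : Bnd) : Bnd :=
  ⟨b₁.1 ∩ b₂.1, Set.inter_subset_left.trans b₁.2.1, b₁.2.2.inter b₂.2.2⟩

/-- Intersection of the family `{f i | p i}` of bounds (the empty
intersection being `[0,1]`). -/
def iInterP {ι : Sort*} (p : ι → Prop) (f : ι → Bnd) : Bnd :=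
  ⟨Set.Icc 0 1 ∩ ⋂ (i) (_ : p i), (f i).1, Set.inter_subset_left,
    Set.ordConnected_Icc.inter
      (Set.ordConnected_iInter fun i =>
        Set.ordConnected_iInter fun _ => (f i).2.2)⟩

end Bnd

/-- Network formulas, built from network atoms `⟨L, bnd⟩` by `∧`, `∨`, `¬`. -/
inductive NetFormula (L : Type) where
  | atom : L → Bnd → NetFormula L
  | neg  : NetFormula L → NetFormula L
  | conj : NetFormula L → NetFormula L → NetFormula L
  | disj : NetFormula L → NetFormula L → NetFormula L

/-- A world assigns to each label its unique (possibly empty) bound; by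
convention a label with no explicit atom is assigned `[0,1]`, so worlds are
represented functionally. `⟨lab, bnd⟩ ∈ W` means `W lab = bnd`. -/
abbrev World (L : Type) := L → Bnd

/-- Satisfaction of a network atom `⟨lab, b⟩` by a world: `⟨lab,[0,1]⟩` is
always satisfied, `⟨lab,∅⟩` never, and otherwise `W ⊨ ⟨lab,b⟩` iff the bound
of `lab` in `W` is contained in `b`. -/
def World.satAtom {L : Type} (W : World L) (lab : L) (b : Bnd) : Prop :=
  b = Bnd.full ∨ (b ≠ Bnd.empty ∧ (W lab).1 ⊆ b.1)

/-- Satisfaction of a network formula by a world (classical connectives). -/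
def World.sat {L : Type} (W : World L) : NetFormula L → Prop
  | .atom lab b => W.satAtom lab b
  | .neg f => ¬ W.sat f
  | .conj f g => W.sat f ∧ W.sat g
  | .disj f g => W.sat f ∨ W.sat g

/-- The components `𝒢 = V ∪ E` of the network: nodes and (directed) edges. -/
inductive Comp (V : Type) where
  | node : V → Comp V
  | edge : V → V → Comp V

/-- An influence function: a map `ℕ × ℕ →` subintervals of `[0,1]` that is
antitone (w.r.t. `⊆`) in its first argument. -/
structure IflFun where
  f : ℕ → ℕ → Bnd
  antitone : ∀ ⦃x x' : ℕ⦄ (y : ℕ), x < x' → (f x' y).1 ⊆ (f x y).1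

/-- A rule `L ←^{Δt} f, (g_edge, g_node, h)_{ifl}`. -/
structure Rule (L : Type) where
  head : L
  delta : ℕ
  target : NetFormula L
  gEdge : NetFormula L
  gNode : NetFormula L
  h : NetFormula L
  ifl : IflFun

/-- A fact `(⟨lab, bnd⟩, c) : [t1, t2]`. -/
structure MFact (V L : Type) where
  lab : L
  bnd : Bnd
  comp : Comp V
  t1 : ℕ
  t2 : ℕ

/-- An integrity constraint `⟨lab, bnd⟩ ↩ body`. -/
structure IC (L : Type) where
  lab : L
  bnd : Bnd
  body : NetFormula L

/-- A formula is non-fluent when all its atoms carry non-fluent labels. -/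
def NetFormula.NonFluent {L : Type} (flu : L → Prop) : NetFormula L → Prop
  | .atom lab _ => ¬ flu lab
  | .neg f => f.NonFluent flu
  | .conj f g => f.NonFluent flu ∧ g.NonFluent flu
  | .disj f g => f.NonFluent flu ∧ g.NonFluent flu

/-- Formulas that are conjunctions of network atoms. -/
inductive NetFormula.ConjAtoms {L : Type} : NetFormula L → Prop
  | atom (lab : L) (b : Bnd) : ConjAtoms (.atom lab b)
  | conj {f g : NetFormula L} : ConjAtoms f → ConjAtoms g → ConjAtoms (.conj f g)

/-- A MANCaLog program: a finite set of rules, facts and integrity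
constraints, with the well-formedness conditions from the definitions
(fluent rule heads, non-fluent target/neighbor criteria, `h` and IC bodies
conjunctions of atoms, fact intervals inside `[0,tmax]`, non-fluent facts
spanning `[0,tmax]`; non-fluent facts occur at most once since `facts` is a
set). -/
structure Program (V L : Type) (E : Set (V × V)) (flu : L → Prop) (tmax : ℕ) where
  rules : Set (Rule L)
  facts : Set (MFact V L)
  ics : Set (IC L)
  rules_fin : rules.Finite
  facts_fin : facts.Finite
  ics_fin : ics.Finite
  rules_wf : ∀ r ∈ rules, flu r.head ∧ r.target.NonFluent flu ∧
      r.gEdge.NonFluent flu ∧ r.gNode.NonFluent flu ∧ r.h.ConjAtoms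
  facts_wf : ∀ F ∈ facts, F.t1 ≤ F.t2 ∧ F.t2 ≤ tmax ∧
      (¬ flu F.lab → F.t1 = 0 ∧ F.t2 = tmax)
  ics_wf : ∀ ic ∈ ics, flu ic.lab ∧ ic.body.ConjAtoms

/-- An interpretation maps every time point to a network interpretation,
i.e. a map from components to worlds. -/
abbrev Interp (V L : Type) := ℕ → Comp V → World L

section Semantics

variable {V L : Type} {E : Set (V × V)} {flu : L → Prop} {tmax : ℕ}

/-- `Elig(v, g_edge, g_node, NI)`: eligible influencers of `v`. -/
def Elig (E : Set (V × V)) (NI : Comp V → World L) (v : V)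
    (gE gN : NetFormula L) : Set V :=
  {v' | (NI (.node v')).sat gN ∧ (v', v) ∈ E ∧ (NI (.edge v' v)).sat gE}

/-- `Qual(v, g_edge, g_node, h, NI)`: qualifying influencers of `v`. -/
def Qual (E : Set (V × V)) (NI : Comp V → World L) (v : V)
    (gE gN h : NetFormula L) : Set V :=
  {v' ∈ Elig E NI v gE gN | (NI (.node v')).sat h}

/-- `Bound(r, v, NI) = ifl(|Qual|, |Elig|)`. -/
def Bound (E : Set (V × V)) (r : Rule L) (v : V) (NI : Comp V → World L) : Bnd :=
  r.ifl.f (Qual E NI v r.gEdge r.gNode r.h).ncard (Elig E NI v r.gEdge r.gNode).ncard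

/-- `TTS(I, c, r)`: the target time set of a rule. -/
def TTSrule (tmax : ℕ) (I : Interp V L) (c : Comp V) (r : Rule L) : Set ℕ :=
  {t | t ≤ tmax ∧ (I (t - r.delta) c).sat r.target}

/-- `TTS(I, c, L, P)`: the target time set of a label w.r.t. a program. -/
def TTS (P : Program V L E flu tmax) (I : Interp V L) (c : Comp V) (lab : L) :
    Set ℕ :=
  (⋃ r ∈ {r ∈ P.rules | r.head = lab}, TTSrule tmax I c r) ∪
  {t | ∃ F ∈ P.facts, F.lab = lab ∧ F.comp = c ∧ F.t1 ≤ t ∧ t ≤ F.t2} ∪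
  {t | t ≤ tmax ∧ ∃ ic ∈ P.ics, ic.lab = lab ∧ (I t c).sat ic.body}

/-- `FBnd(P, c, t, lab)`. -/
def FBnd (P : Program V L E flu tmax) (c : Comp V) (t : ℕ) (lab : L) : Bnd :=
  Bnd.iInterP
    (fun F : MFact V L => F ∈ P.facts ∧ F.lab = lab ∧ F.comp = c ∧ F.t1 ≤ t ∧ t ≤ F.t2)
    (fun F => F.bnd)

/-- `IBnd(P, I, c, t, lab)`. -/
def IBnd (P : Program V L E flu tmax) (I : Interp V L) (c : Comp V) (t : ℕ)
    (lab : L) : Bnd :=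
  Bnd.iInterP
    (fun ic : IC L => ic ∈ P.ics ∧ ic.lab = lab ∧ (I t c).sat ic.body)
    (fun ic => ic.bnd)

/-- `RBnd(P, I, v, t, lab)`. -/
def RBnd (P : Program V L E flu tmax) (I : Interp V L) (v : V) (t : ℕ)
    (lab : L) : Bnd :=
  Bnd.iInterP
    (fun r : Rule L => r ∈ P.rules ∧ r.head = lab ∧
      t ∈ TTS P I (.node v) lab ∧ t ∈ TTSrule tmax I (.node v) r)
    (fun r => Bound E r v (fun c => I (t - r.delta) c))

/-- The operator `Γ_P` (defined on time points `t ∈ τ = [0, tmax]`;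
outside `τ` interpretations are left untouched).  Rules only constrain
nodes, hence `RBnd` is only intersected at node components. -/
def Gamma (P : Program V L E flu tmax) (I : Interp V L) : Interp V L :=
  fun t c lab =>
    if t ≤ tmax then
      match c with
      | .node v =>
          (((I t c lab).inter (FBnd P c t lab)).inter (IBnd P I c t lab)).inter
            (RBnd P I v t lab)
      | .edge _ _ =>
          ((I t c lab).inter (FBnd P c t lab)).inter (IBnd P I c t lab)
    else I t c lab

/-- Iterated applications of `Γ`: `Γ^0 = id`, `Γ^{i} = Γ ∘ Γ^{i-1}`. -/
def GammaIter (P : Program V L E flu tmax) : ℕ → Interp V L → Interp V L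
  | 0, I => I
  | n + 1, I => Gamma P (GammaIter P n I)

/-- The preorder `I ⊑ I'`: on every `t ∈ τ`, component and label, the bound
assigned by `I'` is contained in the one assigned by `I`. -/
def sqle (tmax : ℕ) (I I' : Interp V L) : Prop :=
  ∀ t ≤ tmax, ∀ (c : Comp V) (lab : L), (I' t c lab).1 ⊆ (I t c lab).1

/-- `I` satisfies a fact. -/
def SatFact (I : Interp V L) (F : MFact V L) : Prop :=
  ∀ t, F.t1 ≤ t → t ≤ F.t2 → (I t F.comp).satAtom F.lab F.bnd

/-- `I` strictly satisfies a fact: the atom itself belongs to the world. -/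
def StrictSatFact (I : Interp V L) (F : MFact V L) : Prop :=
  ∀ t, F.t1 ≤ t → t ≤ F.t2 → I t F.comp F.lab = F.bnd

/-- `I` satisfies an integrity constraint. -/
def SatIC (tmax : ℕ) (I : Interp V L) (ic : IC L) : Prop :=
  ∀ t ≤ tmax, ∀ c : Comp V,
    (I t c).sat (.disj (.neg ic.body) (.atom ic.lab ic.bnd))

/-- `I` satisfies a rule. -/
def SatRule (E : Set (V × V)) (tmax : ℕ) (I : Interp V L) (r : Rule L) : Prop :=
  ∀ v : V, ∀ t ∈ TTSrule tmax I (.node v) r,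
    (I t (.node v)).satAtom r.head (Bound E r v (fun c => I (t - r.delta) c))

/-- `I ⊨ P`: `I` is a model of the program `P`. -/
def IsModel (P : Program V L E flu tmax) (I : Interp V L) : Prop :=
  (∀ r ∈ P.rules, SatRule E tmax I r) ∧
  (∀ ic ∈ P.ics, SatIC tmax I ic) ∧
  (∀ F ∈ P.facts, flu F.lab → SatFact I F) ∧
  (∀ F ∈ P.facts, ¬ flu F.lab → StrictSatFact I F) ∧
  (∀ (lab : L) (c : Comp V), ∀ t ≤ tmax, t ∉ TTS P I c lab → I t c lab = Bnd.full)

/-- `P` entails a fact iff every model of `P` satisfies it. -/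
def Entails (P : Program V L E flu tmax) (F : MFact V L) : Prop :=
  ∀ I : Interp V L, IsModel P I → SatFact I F

/-- The initial interpretation `I₀` assigning `⟨L,[0,1]⟩` everywhere. -/
def I0 (V L : Type) : Interp V L := fun _ _ _ => Bnd.full

end Semantics

/-- entailment is decided by the minimal model: if `I_min` is a
minimal model of a consistent program `P`, then for every fact `F` (with
time interval inside `[0,t_max]`), `P` entails `F` iff `I_min ⊨ F`. -/
theorem entails_iff_minimal_model_sat {V L : Type} [Fintype V] [Fintype L]
    {E : Set (V × V)} {flu : L → Prop} {tmax : ℕ} (P : Program V L E flu tmax)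
    (Imin : Interp V L) (hmodel : IsModel P Imin)
    (hmin : ∀ I : Interp V L, IsModel P I → sqle tmax Imin I)
    (F : MFact V L) (hF : F.t2 ≤ tmax) :
    Entails P F ↔ SatFact Imin F := by
  constructor
  · intro h
    exact h Imin hmodel
  · intro h I hI t ht1 ht2
    rcases h t ht1 ht2 with hfull | ⟨hne, hsub⟩
    · exact Or.inl hfull
    · exact Or.inr ⟨hne, (hmin I hI t (ht2.trans hF) F.comp F.lab).trans hsub⟩
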